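/- Let m ≥ 1. For every permutation u ∈ S_{2m}, u belongs to the segment [id, w_{2m}] if and only if h(u) belongs to C_{2m+2}, where h(u) = η(α u⁻¹ β⁻¹). -/

import Mathlib

/-- Membership in `S_n`, realized as permutations of `ℕ` fixing every point
outside `{1, …, n}`. -/
def InSymm (n : ℕ) (π : Equiv.Perm ℕ) : Prop :=
  ∀ i : ℕ, i ∉ Finset.Icc 1 n → π i = i

/-- The ℓ¹-distance `D(u,v) = ∑_{i=1}^n |u(i) − v(i)|` on `S_n`. -/
def permDist (n : ℕ) (u v : Equiv.Perm ℕ) : ℤ :=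
  ∑ i ∈ Finset.Icc 1 n, |(u i : ℤ) - (v i : ℤ)|

/-!
By the triangle inequality termwise, `u ∈ [id, w]` exactly when every value `k = u t` lies
between `t` and `w t`. Since `α t` is `2t − 1` for `t ≤ m` and `2(t − m)` for `t > m`, this
betweenness reads `α t ≤ 2k ∧ 2k − 2m − 1 ≤ α t` (truncated subtraction), i.e. a condition on
`σ = α u⁻¹` at `k`; the first inequality can only fail for `k < m`, the second only for
`k > m + 1`. Precomposing with `β⁻¹` moves the first family to the odd positions `3, …, 2m − 1`
and the second to the even positions `2, …, 2m − 2`, where after the shift `η` they become the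
inequalities defining `C_{2m+2}`; the pairs `i = 1` and `i = m + 1` of `C_{2m+2}` hold
automatically thanks to the entries `1` and `2m + 2` inserted by `η`.
-/

open Finset Equiv

namespace InSymm

variable {n : ℕ} {π σ : Perm ℕ}

theorem mapsTo (h : InSymm n π) {i : ℕ} (hi : i ∈ Icc 1 n) : π i ∈ Icc 1 n := by
  by_contra hc
  exact hc (by rwa [π.injective (h _ hc)])

theorem inv (h : InSymm n π) : InSymm n π⁻¹ := fun i hi => by
  rw [Perm.inv_eq_iff_eq, h i hi]

theorem mul (hπ : InSymm n π) (hσ : InSymm n σ) : InSymm n (π * σ) := fun i hi => by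
  rw [Perm.mul_apply, hσ i hi, hπ i hi]

theorem forall_mem_Icc_apply_iff (h : InSymm n π) {P : ℕ → ℕ → Prop} :
    (∀ t ∈ Icc 1 n, P t (π t)) ↔ ∀ k ∈ Icc 1 n, P (π⁻¹ k) k := by
  refine ⟨fun hP k hk => ?_, fun hP t ht => ?_⟩
  · simpa using hP _ (h.inv.mapsTo hk)
  · simpa using hP _ (h.mapsTo ht)

end InSymm

theorem permDist_add_permDist_eq_iff (n : ℕ) (u v w : Perm ℕ) :
    permDist n u v + permDist n v w = permDist n u w ↔
      ∀ i ∈ Icc 1 n, |(u i : ℤ) - w i| = |(u i : ℤ) - v i| + |(v i : ℤ) - w i| := by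
  rw [permDist, permDist, permDist, ← sum_add_distrib, eq_comm]
  exact sum_eq_sum_iff_of_le fun i _ => abs_sub_le _ _ _

theorem abs_sub_eq_abs_sub_add_abs_sub_iff {G : Type*} [AddCommGroup G] [LinearOrder G]
    [IsOrderedAddMonoid G] {a b c : G} :
    |a - c| = |a - b| + |b - c| ↔ a ≤ b ∧ b ≤ c ∨ c ≤ b ∧ b ≤ a := by
  rw [← sub_add_sub_cancel a b c, abs_add_eq_add_abs_iff]
  simp only [sub_nonneg, sub_nonpos]
  tauto

theorem abs_sub_w_eq_add_iff {m t k : ℕ} {w α : Perm ℕ}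
    (hw1 : ∀ j, 1 ≤ j → j ≤ m → w j = j + m)
    (hw2 : ∀ j, m + 1 ≤ j → j ≤ 2 * m → w j = j - m)
    (hα1 : ∀ j, 1 ≤ j → j ≤ m → α j = 2 * j - 1)
    (hα2 : ∀ j, m + 1 ≤ j → j ≤ 2 * m → α j = 2 * j - 2 * m)
    (ht : t ∈ Icc 1 (2 * m)) :
    |(t : ℤ) - w t| = |(t : ℤ) - k| + |(k : ℤ) - w t| ↔
      α t ≤ 2 * k ∧ 2 * k - 2 * m - 1 ≤ α t := by
  rw [abs_sub_eq_abs_sub_add_abs_sub_iff]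
  rw [mem_Icc] at ht
  rcases le_or_gt t m with h | h
  · rw [hw1 t ht.1 h, hα1 t ht.1 h]
    omega
  · rw [hw2 t h ht.2, hα2 t h ht.2]
    omega

theorem C_condition_iff_of_eta {m : ℕ} (hm : 1 ≤ m) {g hp : Perm ℕ} (hg : InSymm (2 * m) g)
    (hh1 : hp 1 = g 1 + 1) (hh2 : hp 2 = 1)
    (hh3 : ∀ i, 3 ≤ i → i ≤ 2 * m → hp i = g (i - 1) + 1)
    (hh4 : hp (2 * m + 1) = 2 * m + 2) (hh5 : hp (2 * m + 2) = g (2 * m) + 1) :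
    (∀ i, 1 ≤ i → i ≤ m + 1 → hp (2 * i) < 2 * i ∧ 2 * i ≤ hp (2 * i - 1)) ↔
      ∀ i, 2 ≤ i → i ≤ m → g (2 * i - 1) < 2 * i - 1 ∧ 2 * i - 1 ≤ g (2 * i - 2) := by
  have hg1 := mem_Icc.mp (hg.mapsTo (mem_Icc.mpr ⟨le_rfl, by omega⟩))
  have hg2m := mem_Icc.mp (hg.mapsTo (mem_Icc.mpr ⟨by omega, le_rfl⟩))
  have hh3' : ∀ i, 2 ≤ i → i ≤ m →
      hp (2 * i) = g (2 * i - 1) + 1 ∧ hp (2 * i - 1) = g (2 * i - 2) + 1 := fun i hi2 him =>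
    ⟨hh3 _ (by omega) (by omega), hh3 _ (by omega) (by omega)⟩
  refine ⟨fun h i hi2 him => ?_, fun h i hi1 him => ?_⟩
  · have := h i (by omega) (by omega)
    rw [(hh3' i hi2 him).1, (hh3' i hi2 him).2] at this
    omega
  · obtain rfl | hi2 := hi1.eq_or_lt
    · rw [hh1, hh2]
      omega
    obtain rfl | him := him.eq_or_lt
    · rw [show 2 * (m + 1) = 2 * m + 2 by ring, show 2 * m + 2 - 1 = 2 * m + 1 by rfl, hh4, hh5]
      omega
    · rw [(hh3' i hi2 (by omega)).1, (hh3' i hi2 (by omega)).2]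
      have := h i hi2 (by omega)
      omega

theorem forall_mul_beta_inv_iff {m : ℕ} {β σ : Perm ℕ} (hσ : InSymm (2 * m) σ)
    (hβ1 : ∀ j, 1 ≤ j → j ≤ m - 1 → β j = 2 * j + 1)
    (hβ4 : ∀ j, m + 2 ≤ j → j ≤ 2 * m → β j = 2 * j - 2 * m - 2) :
    (∀ i, 2 ≤ i → i ≤ m →
        (σ * β⁻¹) (2 * i - 1) < 2 * i - 1 ∧ 2 * i - 1 ≤ (σ * β⁻¹) (2 * i - 2)) ↔
      ∀ k ∈ Icc 1 (2 * m), σ k ≤ 2 * k ∧ 2 * k - 2 * m - 1 ≤ σ k := by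
  have hβ1' : ∀ k, 1 ≤ k → k ≤ m - 1 → β⁻¹ (2 * k + 1) = k := fun k hk1 hk2 => by
    rw [Perm.inv_eq_iff_eq, hβ1 k hk1 hk2]
  have hβ4' : ∀ k, m + 2 ≤ k → k ≤ 2 * m → β⁻¹ (2 * k - 2 * m - 2) = k := fun k hk1 hk2 => by
    rw [Perm.inv_eq_iff_eq, hβ4 k hk1 hk2]
  refine ⟨fun h k hk => ?_, fun h i hi2 him => ?_⟩
  · have hσk := mem_Icc.mp (hσ.mapsTo hk)
    rw [mem_Icc] at hk
    constructor
    · by_cases hkm : k ≤ m - 1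
      · have := (h (k + 1) (by omega) (by omega)).1
        rw [show 2 * (k + 1) - 1 = 2 * k + 1 by omega, Perm.mul_apply, hβ1' k hk.1 hkm] at this
        omega
      · omega
    · by_cases hkm : m + 2 ≤ k
      · have := (h (k - m) (by omega) (by omega)).2
        rw [show 2 * (k - m) - 2 = 2 * k - 2 * m - 2 by omega, Perm.mul_apply,
          hβ4' k hkm hk.2] at this
        omega
      · omega
  · constructor
    · have := (h (i - 1) (mem_Icc.mpr ⟨by omega, by omega⟩)).1
      rw [show 2 * i - 1 = 2 * (i - 1) + 1 by omega, Perm.mul_apply,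
        hβ1' (i - 1) (by omega) (by omega)]
      omega
    · have := (h (m + i) (mem_Icc.mpr ⟨by omega, by omega⟩)).2
      rw [show 2 * i - 2 = 2 * (m + i) - 2 * m - 2 by omega, Perm.mul_apply,
        hβ4' (m + i) (by omega) (by omega)]
      omega

theorem mem_segment_iff_h_mem_C_general (m : ℕ) (hm : 1 ≤ m) (w α β : Equiv.Perm ℕ)
    -- `w` is `w_{2m}` with one-line notation `(m+1, …, 2m, 1, …, m)`
    (hw1 : ∀ j, 1 ≤ j → j ≤ m → w j = j + m)
    (hw2 : ∀ j, m + 1 ≤ j → j ≤ 2 * m → w j = j - m)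
    -- `α` has one-line notation `(1, 3, …, 2m−1, 2, 4, …, 2m)`
    (hα0 : InSymm (2 * m) α)
    (hα1 : ∀ j, 1 ≤ j → j ≤ m → α j = 2 * j - 1)
    (hα2 : ∀ j, m + 1 ≤ j → j ≤ 2 * m → α j = 2 * j - 2 * m)
    -- `β` has one-line notation `(3, 5, …, 2m−1, 1, 2m, 2, 4, …, 2m−2)`
    (hβ0 : InSymm (2 * m) β)
    (hβ1 : ∀ j, 1 ≤ j → j ≤ m - 1 → β j = 2 * j + 1)
    (hβ4 : ∀ j, m + 2 ≤ j → j ≤ 2 * m → β j = 2 * j - 2 * m - 2)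
    (u : Equiv.Perm ℕ) (hu : InSymm (2 * m) u) (hp : Equiv.Perm ℕ)
    -- `hp = h(u) = η(α u⁻¹ β⁻¹)`
    (hh1 : hp 1 = (α * u⁻¹ * β⁻¹) 1 + 1)
    (hh2 : hp 2 = 1)
    (hh3 : ∀ i, 3 ≤ i → i ≤ 2 * m → hp i = (α * u⁻¹ * β⁻¹) (i - 1) + 1)
    (hh4 : hp (2 * m + 1) = 2 * m + 2)
    (hh5 : hp (2 * m + 2) = (α * u⁻¹ * β⁻¹) (2 * m) + 1)
    :
    (permDist (2 * m) 1 u + permDist (2 * m) u w = permDist (2 * m) 1 w) ↔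
      (∀ i, 1 ≤ i → i ≤ m + 1 → hp (2 * i) < 2 * i ∧ 2 * i ≤ hp (2 * i - 1)) := by
  have hσ : InSymm (2 * m) (α * u⁻¹) := hα0.mul hu.inv
  rw [C_condition_iff_of_eta hm (hσ.mul hβ0.inv) hh1 hh2 hh3 hh4 hh5,
    forall_mul_beta_inv_iff hσ hβ1 hβ4, permDist_add_permDist_eq_iff]
  simp only [Perm.one_apply]
  refine (forall₂_congr fun t (ht : t ∈ Icc 1 (2 * m)) =>
    abs_sub_w_eq_add_iff (k := u t) hw1 hw2 hα1 hα2 ht).trans ?_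
  exact hu.forall_mem_Icc_apply_iff (P := fun t k => α t ≤ 2 * k ∧ 2 * k - 2 * m - 1 ≤ α t)

/-- `u ∈ [id, w_{2m}]` iff `h(u) = η(α u⁻¹ β⁻¹) ∈ C_{2m+2}`. -/
theorem mem_segment_iff_h_mem_C (m : ℕ) (hm : 1 ≤ m) (w α β : Equiv.Perm ℕ)
    -- `w` is `w_{2m}` with one-line notation `(m+1, …, 2m, 1, …, m)`
    (hw0 : InSymm (2 * m) w)
    (hw1 : ∀ j, 1 ≤ j → j ≤ m → w j = j + m)
    (hw2 : ∀ j, m + 1 ≤ j → j ≤ 2 * m → w j = j - m)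
    -- `α` has one-line notation `(1, 3, …, 2m−1, 2, 4, …, 2m)`
    (hα0 : InSymm (2 * m) α)
    (hα1 : ∀ j, 1 ≤ j → j ≤ m → α j = 2 * j - 1)
    (hα2 : ∀ j, m + 1 ≤ j → j ≤ 2 * m → α j = 2 * j - 2 * m)
    -- `β` has one-line notation `(3, 5, …, 2m−1, 1, 2m, 2, 4, …, 2m−2)`
    (hβ0 : InSymm (2 * m) β)
    (hβ1 : ∀ j, 1 ≤ j → j ≤ m - 1 → β j = 2 * j + 1)
    (hβ2 : β m = 1)
    (hβ3 : β (m + 1) = 2 * m)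
    (hβ4 : ∀ j, m + 2 ≤ j → j ≤ 2 * m → β j = 2 * j - 2 * m - 2)
    (u : Equiv.Perm ℕ) (hu : InSymm (2 * m) u) (hp : Equiv.Perm ℕ)
    -- `hp = h(u) = η(α u⁻¹ β⁻¹)`
    (hh0 : InSymm (2 * m + 2) hp)
    (hh1 : hp 1 = (α * u⁻¹ * β⁻¹) 1 + 1)
    (hh2 : hp 2 = 1)
    (hh3 : ∀ i, 3 ≤ i → i ≤ 2 * m → hp i = (α * u⁻¹ * β⁻¹) (i - 1) + 1)
    (hh4 : hp (2 * m + 1) = 2 * m + 2)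
    (hh5 : hp (2 * m + 2) = (α * u⁻¹ * β⁻¹) (2 * m) + 1)
    :
    (permDist (2 * m) 1 u + permDist (2 * m) u w = permDist (2 * m) 1 w) ↔
      (∀ i, 1 ≤ i → i ≤ m + 1 → hp (2 * i) < 2 * i ∧ 2 * i ≤ hp (2 * i - 1)) :=
  mem_segment_iff_h_mem_C_general m hm w α β hw1 hw2 hα0 hα1 hα2 hβ0 hβ1 hβ4 u hu hp hh1 hh2 hh3 hh4
    hh5
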